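/- Let n be a positive integer, let A and B be n×n row-stochastic real matrices, let 0 < c < 1, let ε > 0, and let r_old ∈ ℝⁿ satisfy ‖r_old‖₁ = 1. Define q_offset = (1−c)·(Bᵀ − Aᵀ)·r_old. If k is a natural number such that (1−c)^k ≤ ε/(2(1−c)), then the error incurred by truncating the offset series after k terms satisfies ‖∑_{i=k}^∞ ((1−c)·Bᵀ)^i · q_offset‖₁ ≤ ε/c. That is, when OSP-T converges under error tolerance ε, the ℓ1 error of its output RWR score vector is at most ε/c. (Theorem 3: Error bound of OSP-T.) -/

import Mathlib

open Matrix

/-- An `n × n` real matrix is row-stochastic if all its entries are nonnegative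
and each of its rows sums to `1`. -/
def RowStochastic {n : ℕ} (M : Matrix (Fin n) (Fin n) ℝ) : Prop :=
  (∀ i j, 0 ≤ M i j) ∧ ∀ i, ∑ j, M i j = 1

/-- The ℓ1 norm of a vector in `ℝⁿ`: the sum of absolute values of entries. -/
def l1norm {n : ℕ} (v : Fin n → ℝ) : ℝ := ∑ i, |v i|

/-!
Transposes of row-stochastic matrices are contractions for the ℓ1 norm, so the `i`-th term
of the tail is at most `(1 - c)^i ‖q_offset‖₁`, while `‖q_offset‖₁ ≤ 2(1 - c)` by the triangle
inequality. Summing the geometric series bounds the tail by `(1 - c)^k · 2(1 - c) / c ≤ ε / c`.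
-/

section RowStochastic

variable {n : ℕ} {M : Matrix (Fin n) (Fin n) ℝ}

theorem rowStochastic_iff_mem : RowStochastic M ↔ M ∈ rowStochastic ℝ (Fin n) :=
  mem_rowStochastic_iff_sum.symm

theorem RowStochastic.pow (hM : RowStochastic M) (m : ℕ) : RowStochastic (M ^ m) :=
  rowStochastic_iff_mem.2 (pow_mem (rowStochastic_iff_mem.1 hM) m)

end RowStochastic

section L1Norm

variable {n : ℕ}

theorem l1norm_eq_norm_toLp (v : Fin n → ℝ) : l1norm v = ‖WithLp.toLp 1 v‖ := by
  simp [l1norm, PiLp.norm_eq_of_L1]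

theorem l1norm_smul (a : ℝ) (v : Fin n → ℝ) : l1norm (a • v) = |a| * l1norm v := by
  simp only [l1norm_eq_norm_toLp, WithLp.toLp_smul, norm_smul, Real.norm_eq_abs]

theorem l1norm_sub_le (v w : Fin n → ℝ) : l1norm (v - w) ≤ l1norm v + l1norm w := by
  simpa only [l1norm_eq_norm_toLp, WithLp.toLp_sub] using norm_sub_le _ _

theorem l1norm_tsum_le {ι : Type*} {f : ι → Fin n → ℝ} {g : ι → ℝ} {a : ℝ} (hg : HasSum g a)
    (h : ∀ i, l1norm (f i) ≤ g i) : l1norm (∑' i, f i) ≤ a := by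
  have hcomm : WithLp.toLp 1 (∑' i, f i) = ∑' i, WithLp.toLp 1 (f i) :=
    (PiLp.continuousLinearEquiv 1 ℝ fun _ : Fin n => ℝ).symm.map_tsum
  rw [l1norm_eq_norm_toLp, hcomm]
  exact tsum_of_norm_bounded hg fun i => (l1norm_eq_norm_toLp (f i)).symm.trans_le (h i)

theorem l1norm_transpose_mulVec_le {M : Matrix (Fin n) (Fin n) ℝ} (hM : RowStochastic M)
    (v : Fin n → ℝ) : l1norm (Mᵀ *ᵥ v) ≤ l1norm v :=
  calc l1norm (Mᵀ *ᵥ v) ≤ ∑ i, ∑ j, M j i * |v j| := by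
        unfold l1norm
        refine Finset.sum_le_sum fun i _ => ?_
        rw [mulVec, dotProduct]
        refine (Finset.abs_sum_le_sum_abs _ _).trans_eq ?_
        simp only [transpose_apply, abs_mul, abs_of_nonneg (hM.1 _ i)]
    _ = ∑ j, (∑ i, M j i) * |v j| := by rw [Finset.sum_comm]; simp only [Finset.sum_mul]
    _ = l1norm v := by simp only [hM.2, one_mul, l1norm]

theorem l1norm_smul_transpose_pow_mulVec_le {M : Matrix (Fin n) (Fin n) ℝ} (hM : RowStochastic M)
    {a : ℝ} (ha : 0 ≤ a) (m : ℕ) (v : Fin n → ℝ) :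
    l1norm (((a • Mᵀ) ^ m) *ᵥ v) ≤ a ^ m * l1norm v := by
  rw [smul_pow, smul_mulVec, l1norm_smul, abs_of_nonneg (pow_nonneg ha m), ← transpose_pow]
  exact mul_le_mul_of_nonneg_left (l1norm_transpose_mulVec_le (hM.pow m) v) (pow_nonneg ha m)

theorem l1norm_transpose_sub_mulVec_le {A B : Matrix (Fin n) (Fin n) ℝ} (hA : RowStochastic A)
    (hB : RowStochastic B) (v : Fin n → ℝ) : l1norm ((Bᵀ - Aᵀ) *ᵥ v) ≤ 2 * l1norm v := by
  rw [sub_mulVec]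
  linarith [l1norm_sub_le (Bᵀ *ᵥ v) (Aᵀ *ᵥ v), l1norm_transpose_mulVec_le hB v,
    l1norm_transpose_mulVec_le hA v]

end L1Norm

theorem hasSum_geometric_tail {r : ℝ} (h₀ : 0 ≤ r) (h₁ : r < 1) (k : ℕ) (C : ℝ) :
    HasSum (fun i : ℕ => r ^ (k + i) * C) (r ^ k * C / (1 - r)) := by
  have := ((hasSum_geometric_of_lt_one h₀ h₁).mul_left (r ^ k)).mul_right C
  simpa only [pow_add, div_eq_mul_inv, mul_right_comm _ C] using this

theorem stmt_8_general {n : ℕ} (A B : Matrix (Fin n) (Fin n) ℝ)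
    (hA : RowStochastic A) (hB : RowStochastic B)
    (c : ℝ) (hc0 : 0 < c) (hc1 : c < 1) (ε : ℝ)
    (rold : Fin n → ℝ) (hrold : l1norm rold = 1)
    (qoffset : Fin n → ℝ)
    (hqoffset : qoffset = (1 - c) • (Bᵀ - Aᵀ).mulVec rold)
    (k : ℕ) (hk : (1 - c) ^ k ≤ ε / (2 * (1 - c))) :
    l1norm (∑' i : ℕ, (((1 - c) • Bᵀ) ^ (k + i)).mulVec qoffset) ≤ ε / c := by
  have h1c : 0 < 1 - c := sub_pos.2 hc1
  have hq : l1norm qoffset ≤ 2 * (1 - c) := by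
    rw [hqoffset, l1norm_smul, abs_of_pos h1c, mul_comm]
    simpa [hrold] using mul_le_mul_of_nonneg_right
      (l1norm_transpose_sub_mulVec_le hA hB rold) h1c.le
  have hsum := hasSum_geometric_tail h1c.le (sub_lt_self 1 hc0) k (2 * (1 - c))
  rw [sub_sub_cancel] at hsum
  refine (l1norm_tsum_le hsum fun i => ?_).trans ?_
  · exact (l1norm_smul_transpose_pow_mulVec_le hB h1c.le _ _).trans
      (mul_le_mul_of_nonneg_left hq (pow_nonneg h1c.le _))
  · gcongr
    rwa [le_div_iff₀ (by positivity)] at hk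

/-- Theorem 3 (Error bound of OSP-T): if `(1-c)^k ≤ ε / (2(1-c))`, then the
truncation error `‖∑_{i=k}^∞ ((1-c)Bᵀ)^i q_offset‖₁` is at most `ε / c`. -/
theorem stmt_8 {n : ℕ} (hn : 0 < n) (A B : Matrix (Fin n) (Fin n) ℝ)
    (hA : RowStochastic A) (hB : RowStochastic B)
    (c : ℝ) (hc0 : 0 < c) (hc1 : c < 1) (ε : ℝ) (hε : 0 < ε)
    (rold : Fin n → ℝ) (hrold : l1norm rold = 1)
    (qoffset : Fin n → ℝ)
    (hqoffset : qoffset = (1 - c) • (Bᵀ - Aᵀ).mulVec rold)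
    (k : ℕ) (hk : (1 - c) ^ k ≤ ε / (2 * (1 - c))) :
    l1norm (∑' i : ℕ, (((1 - c) • Bᵀ) ^ (k + i)).mulVec qoffset) ≤ ε / c :=
  stmt_8_general A B hA hB c hc0 hc1 ε rold hrold qoffset hqoffset k hk
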